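/- arXiv:2401.11380 — 2 statements merged into one kernel-verified Lean document; each statement's English description precedes it below -/
import Mathlib

section
/- Under the hypotheses of the simulation lemma (finite S, A; r ∈ [0,1]; 0 ≤ γ < 1), if 0 ≤ V_{P̂}^π(s) ≤ C for all s, then |V_P^π − V_{P̂}^π| ≤ C·(γ/(1−γ))·E_{(s,a)∼d_P^π}[ TV(P(·|s,a), P̂(·|s,a)) ], where TV is the total variation distance between the next-state distributions. -/
/-- TV-style bound: if `p, q` sum to 1 and `0 ≤ f ≤ C`, then
`|∑ (p - q) f| ≤ (C/2) ∑ |p - q|`. -/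
lemma stmt_18_tv {S : Type*} [Fintype S] (p q f : S → ℝ) (C : ℝ)
    (hp : ∑ s, p s = 1) (hq : ∑ s, q s = 1)
    (hf : ∀ s, 0 ≤ f s ∧ f s ≤ C) :
    |∑ s, (p s - q s) * f s| ≤ C / 2 * ∑ s, |p s - q s| := by
  have h1 : ∑ s, (p s - q s) * f s = ∑ s, (p s - q s) * (f s - C / 2) := by
    have : ∑ s, (p s - q s) * (f s - C / 2)
        = (∑ s, (p s - q s) * f s) - C / 2 * ((∑ s, p s) - ∑ s, q s) := by
      simp only [mul_sub, sub_mul, Finset.sum_sub_distrib, Finset.mul_sum]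
      congr 1
      congr 1 <;> exact Finset.sum_congr rfl fun s _ => mul_comm _ _
    rw [this, hp, hq]; ring
  rw [h1]
  calc |∑ s, (p s - q s) * (f s - C / 2)| ≤ ∑ s, |(p s - q s) * (f s - C / 2)| :=
        Finset.abs_sum_le_sum_abs _ _
    _ ≤ ∑ s, |p s - q s| * (C / 2) := by
        refine Finset.sum_le_sum fun s _ => ?_
        rw [abs_mul]
        refine mul_le_mul_of_nonneg_left ?_ (abs_nonneg _)
        exact abs_le.mpr ⟨by linarith [(hf s).1, (hf s).2], by linarith [(hf s).2]⟩
    _ = C / 2 * ∑ s, |p s - q s| := by rw [← Finset.sum_mul, mul_comm]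

/-- Simulation lemma bound in a finite MDP: if 0 ≤ V_{P̂}^π(s) ≤ C for all s, then
|V_P^π − V_{P̂}^π| ≤ C·(γ/(1−γ))·E_{(s,a)∼d_P^π}[TV(P(·|s,a), P̂(·|s,a))]. -/
theorem stmt_18 {S A : Type*} [Fintype S] [Fintype A]
    (γ : ℝ) (hγ0 : 0 ≤ γ) (hγ1 : γ < 1) (C : ℝ)
    (P Phat : S → A → S → ℝ) (π : S → A → ℝ) (r : S → A → ℝ) (μ0 : S → ℝ)
    (hP : ∀ s a, (∀ s', 0 ≤ P s a s') ∧ (∑ s', P s a s') = 1)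
    (hPhat : ∀ s a, (∀ s', 0 ≤ Phat s a s') ∧ (∑ s', Phat s a s') = 1)
    (hπ : ∀ s, (∀ a, 0 ≤ π s a) ∧ (∑ a, π s a) = 1)
    (hμ0 : (∀ s, 0 ≤ μ0 s) ∧ (∑ s, μ0 s) = 1)
    (hr : ∀ s a, r s a ∈ Set.Icc (0 : ℝ) 1)
    (VP VPhat : S → ℝ) (d : S → A → ℝ)
    (hVP : ∀ s, VP s = ∑ a, π s a * (r s a + γ * ∑ s', P s a s' * VP s'))
    (hVPhat : ∀ s, VPhat s = ∑ a, π s a * (r s a + γ * ∑ s', Phat s a s' * VPhat s'))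
    (hd : ∀ s a, d s a =
      π s a * ((1 - γ) * μ0 s + γ * ∑ s', ∑ a', d s' a' * P s' a' s))
    (hVbd : ∀ s, 0 ≤ VPhat s ∧ VPhat s ≤ C) :
    |(∑ s, μ0 s * VP s) - ∑ s, μ0 s * VPhat s| ≤
      C * (γ / (1 - γ)) * ∑ s, ∑ a, d s a *
        ((1 / 2) * ∑ s', |P s a s' - Phat s a s'|) := by
  classical
  have hγ1' : (0:ℝ) < 1 - γ := by linarith
  -- S is nonempty (else ∑ μ0 = 0 ≠ 1)
  have hSne : Nonempty S := by
    by_contra h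
    rw [not_nonempty_iff] at h
    have := hμ0.2
    rw [Finset.univ_eq_empty, Finset.sum_empty] at this
    norm_num at this
  obtain ⟨s₀⟩ := hSne
  have hC : 0 ≤ C := le_trans (hVbd s₀).1 (hVbd s₀).2
  -- the state-occupancy k and d = π * k
  set k : S → ℝ := fun s => (1 - γ) * μ0 s + γ * ∑ s', ∑ a', d s' a' * P s' a' s
    with hkdef
  have hdk : ∀ s a, d s a = π s a * k s := fun s a => hd s a
  -- k satisfies a fixed-point equation with substochastic columns
  have hkQ : ∀ s, k s = (1 - γ) * μ0 s
      + γ * ∑ s', (∑ a', π s' a' * P s' a' s) * k s' := by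
    intro s
    have hks : k s = (1 - γ) * μ0 s + γ * ∑ s', ∑ a', d s' a' * P s' a' s := rfl
    rw [hks]
    congr 1
    congr 1
    refine Finset.sum_congr rfl fun s' _ => ?_
    rw [Finset.sum_mul]
    refine Finset.sum_congr rfl fun a' _ => ?_
    rw [hdk]; ring
  -- nonnegativity of k
  have hk0 : ∀ s, 0 ≤ k s := by
    by_contra h
    push_neg at h
    obtain ⟨s₁, hs₁⟩ := h
    set N : Finset S := Finset.univ.filter (fun s => k s < 0) with hN
    have hs₁N : s₁ ∈ N := by simp [hN, hs₁]
    have hsumneg : ∑ s ∈ N, k s < 0 := by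
      refine Finset.sum_neg (fun s hs => ?_) ⟨s₁, hs₁N⟩
      exact (Finset.mem_filter.mp hs).2
    have key : ∑ s ∈ N, k s ≥ γ * ∑ s ∈ N, k s := by
      have expand : ∑ s ∈ N, k s = (1 - γ) * ∑ s ∈ N, μ0 s
          + γ * ∑ s', (∑ s ∈ N, ∑ a', π s' a' * P s' a' s) * k s' := by
        calc ∑ s ∈ N, k s
            = ∑ s ∈ N, ((1 - γ) * μ0 s
              + γ * ∑ s', (∑ a', π s' a' * P s' a' s) * k s') :=
              Finset.sum_congr rfl fun s _ => hkQ s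
          _ = (1 - γ) * ∑ s ∈ N, μ0 s
              + γ * ∑ s ∈ N, ∑ s', (∑ a', π s' a' * P s' a' s) * k s' := by
              rw [Finset.sum_add_distrib, Finset.mul_sum, Finset.mul_sum]
          _ = (1 - γ) * ∑ s ∈ N, μ0 s
              + γ * ∑ s', (∑ s ∈ N, ∑ a', π s' a' * P s' a' s) * k s' := by
              rw [Finset.sum_comm]
              simp only [Finset.sum_mul]
      rw [expand]
      have h1 : 0 ≤ (1 - γ) * ∑ s ∈ N, μ0 s :=
        mul_nonneg (by linarith) (Finset.sum_nonneg fun s _ => hμ0.1 s)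
      have h2 : ∑ s', (∑ s ∈ N, ∑ a', π s' a' * P s' a' s) * k s'
          ≥ ∑ s' ∈ N, k s' := by
        have step : ∀ s', (if s' ∈ N then k s' else 0)
            ≤ (∑ s ∈ N, ∑ a', π s' a' * P s' a' s) * k s' := by
          intro s'
          set c := ∑ s ∈ N, ∑ a', π s' a' * P s' a' s with hc
          have hc0 : 0 ≤ c := Finset.sum_nonneg fun s _ =>
            Finset.sum_nonneg fun a' _ =>
              mul_nonneg ((hπ s').1 a') ((hP s' a').1 s)
          have hc1 : c ≤ 1 := by
            have hle : c ≤ ∑ s, ∑ a', π s' a' * P s' a' s :=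
              Finset.sum_le_sum_of_subset_of_nonneg (Finset.subset_univ _)
                (fun s _ _ => Finset.sum_nonneg fun a' _ =>
                  mul_nonneg ((hπ s').1 a') ((hP s' a').1 s))
            have heq : ∑ s, ∑ a', π s' a' * P s' a' s = 1 := by
              rw [Finset.sum_comm]
              calc ∑ a', ∑ s, π s' a' * P s' a' s
                  = ∑ a', π s' a' * ∑ s, P s' a' s := by
                    simp only [Finset.mul_sum]
                _ = ∑ a', π s' a' :=
                    Finset.sum_congr rfl fun a' _ => by rw [(hP s' a').2, mul_one]
                _ = 1 := (hπ s').2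
            linarith
          by_cases hmem : s' ∈ N
          · simp only [hmem, if_true]
            have hk' : k s' < 0 := (Finset.mem_filter.mp hmem).2
            nlinarith
          · simp only [hmem, if_false]
            have hk' : 0 ≤ k s' := by
              by_contra hk''
              exact hmem (Finset.mem_filter.mpr ⟨Finset.mem_univ _, by linarith⟩)
            exact mul_nonneg hc0 hk'
        calc ∑ s' ∈ N, k s' = ∑ s', (if s' ∈ N then k s' else 0) := by
              rw [Finset.sum_ite_mem, Finset.univ_inter]
          _ ≤ ∑ s', (∑ s ∈ N, ∑ a', π s' a' * P s' a' s) * k s' :=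
              Finset.sum_le_sum fun s' _ => step s'
      nlinarith
    nlinarith
  have hd0 : ∀ s a, 0 ≤ d s a := fun s a => by
    rw [hdk]; exact mul_nonneg ((hπ s).1 a) (hk0 s)
  -- notation
  set Δ : S → ℝ := fun s => VP s - VPhat s with hΔdef
  set g : S → A → ℝ := fun s a => ∑ s', (P s a s' - Phat s a s') * VPhat s' with hgdef
  -- Bellman difference equation
  have hBell : ∀ s, Δ s = γ * ∑ a, π s a * ((∑ s', P s a s' * Δ s') + g s a) := by
    intro s
    have h0 : Δ s = ∑ a, π s a * (γ * ((∑ s', P s a s' * Δ s') + g s a)) := by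
      rw [hΔdef]
      simp only
      rw [hVP s, hVPhat s, ← Finset.sum_sub_distrib]
      refine Finset.sum_congr rfl fun a _ => ?_
      rw [← mul_sub]
      congr 1
      have h1 : (∑ s', P s a s' * Δ s') + g s a
          = (∑ s', P s a s' * VP s') - ∑ s', Phat s a s' * VPhat s' := by
        rw [hgdef]
        simp only
        rw [← Finset.sum_add_distrib, ← Finset.sum_sub_distrib]
        refine Finset.sum_congr rfl fun s' _ => ?_
        rw [hΔdef]; ring
      rw [h1]; ring
    rw [h0, Finset.mul_sum]
    exact Finset.sum_congr rfl fun a _ => by ring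
  -- swap lemma
  have Hswap : ∑ s, ∑ s', ∑ a', d s' a' * P s' a' s * Δ s
      = ∑ s', ∑ a', d s' a' * ∑ s, P s' a' s * Δ s := by
    rw [Finset.sum_comm]
    refine Finset.sum_congr rfl fun s' _ => ?_
    rw [Finset.sum_comm]
    refine Finset.sum_congr rfl fun a' _ => ?_
    rw [Finset.mul_sum]
    exact Finset.sum_congr rfl fun s _ => (mul_assoc _ _ _)
  -- first expansion of ∑ k Δ
  have E1 : ∑ s, k s * Δ s
      = (1 - γ) * ∑ s, μ0 s * Δ s
        + γ * ∑ s, ∑ a, d s a * ∑ s', P s a s' * Δ s' := by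
    calc ∑ s, k s * Δ s
        = ∑ s, ((1 - γ) * (μ0 s * Δ s)
            + γ * ∑ s', ∑ a', d s' a' * P s' a' s * Δ s) := by
          refine Finset.sum_congr rfl fun s _ => ?_
          have hks : k s = (1 - γ) * μ0 s + γ * ∑ s', ∑ a', d s' a' * P s' a' s := rfl
          rw [hks, add_mul, mul_assoc γ, Finset.sum_mul]
          congr 1
          · ring
          · congr 1
            exact Finset.sum_congr rfl fun s' _ => Finset.sum_mul _ _ _
      _ = (1 - γ) * ∑ s, μ0 s * Δ s
            + γ * ∑ s, ∑ s', ∑ a', d s' a' * P s' a' s * Δ s := by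
          rw [Finset.sum_add_distrib, Finset.mul_sum, Finset.mul_sum]
      _ = (1 - γ) * ∑ s, μ0 s * Δ s
            + γ * ∑ s, ∑ a, d s a * ∑ s', P s a s' * Δ s' := by
          rw [Hswap]
  -- second expansion of ∑ k Δ via Bellman
  have E2 : ∑ s, k s * Δ s
      = γ * ∑ s, ∑ a, d s a * ∑ s', P s a s' * Δ s'
        + γ * ∑ s, ∑ a, d s a * g s a := by
    calc ∑ s, k s * Δ s
        = ∑ s, (γ * ∑ a, d s a * ((∑ s', P s a s' * Δ s') + g s a)) := by
          refine Finset.sum_congr rfl fun s _ => ?_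
          rw [hBell s, ← mul_assoc, mul_comm (k s) γ, mul_assoc, Finset.mul_sum]
          congr 1
          refine Finset.sum_congr rfl fun a _ => ?_
          rw [hdk]; ring
      _ = γ * ∑ s, ∑ a, (d s a * ∑ s', P s a s' * Δ s' + d s a * g s a) := by
          rw [Finset.mul_sum]
          refine Finset.sum_congr rfl fun s _ => ?_
          congr 1
          exact Finset.sum_congr rfl fun a _ => mul_add _ _ _
      _ = γ * ∑ s, ∑ a, d s a * ∑ s', P s a s' * Δ s'
            + γ * ∑ s, ∑ a, d s a * g s a := by
          simp only [Finset.sum_add_distrib, mul_add]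
  -- the exact identity
  have hid : (1 - γ) * ∑ s, μ0 s * Δ s = γ * ∑ s, ∑ a, d s a * g s a := by
    have := E1.symm.trans E2
    linarith
  have hμΔ : ∑ s, μ0 s * Δ s = (∑ s, μ0 s * VP s) - ∑ s, μ0 s * VPhat s := by
    rw [← Finset.sum_sub_distrib]
    refine Finset.sum_congr rfl fun s _ => ?_
    rw [hΔdef]; ring
  have hmain : (∑ s, μ0 s * VP s) - ∑ s, μ0 s * VPhat s
      = (γ / (1 - γ)) * ∑ s, ∑ a, d s a * g s a := by
    rw [← hμΔ]
    field_simp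
    linarith
  rw [hmain, abs_mul, abs_of_nonneg (div_nonneg hγ0 (le_of_lt hγ1'))]
  have hbound : |∑ s, ∑ a, d s a * g s a|
      ≤ C * ∑ s, ∑ a, d s a * ((1 / 2) * ∑ s', |P s a s' - Phat s a s'|) := by
    calc |∑ s, ∑ a, d s a * g s a| ≤ ∑ s, |∑ a, d s a * g s a| :=
          Finset.abs_sum_le_sum_abs _ _
      _ ≤ ∑ s, ∑ a, |d s a * g s a| :=
          Finset.sum_le_sum fun s _ => Finset.abs_sum_le_sum_abs _ _
      _ ≤ ∑ s, ∑ a, C * (d s a * ((1 / 2) * ∑ s', |P s a s' - Phat s a s'|)) := by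
          refine Finset.sum_le_sum fun s _ => Finset.sum_le_sum fun a _ => ?_
          rw [abs_mul, abs_of_nonneg (hd0 s a)]
          have htv := stmt_18_tv (P s a) (Phat s a) VPhat C (hP s a).2 (hPhat s a).2 hVbd
          calc d s a * |g s a|
              ≤ d s a * (C / 2 * ∑ s', |P s a s' - Phat s a s'|) :=
                mul_le_mul_of_nonneg_left htv (hd0 s a)
            _ = C * (d s a * ((1 / 2) * ∑ s', |P s a s' - Phat s a s'|)) := by ring
      _ = C * ∑ s, ∑ a, d s a * ((1 / 2) * ∑ s', |P s a s' - Phat s a s'|) := by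
          simp only [Finset.mul_sum]
  calc γ / (1 - γ) * |∑ s, ∑ a, d s a * g s a|
      ≤ γ / (1 - γ) * (C * ∑ s, ∑ a, d s a * ((1 / 2) * ∑ s', |P s a s' - Phat s a s'|)) :=
        mul_le_mul_of_nonneg_left hbound (div_nonneg hγ0 (le_of_lt hγ1'))
    _ = C * (γ / (1 - γ)) * ∑ s, ∑ a, d s a * ((1 / 2) * ∑ s', |P s a s' - Phat s a s'|) := by
        ring
end

section
/- In a finite MDP with transition kernel P, policy π satisfies the performance difference lemma: for any two policies π† and π, V_P^{π†} − V_P^{π} = (1/(1−γ)) E_{(s,a)∼d_P^{π†}}[ A_P^{π}(s,a) ], where A_P^{π}(s,a) = Q_P^{π}(s,a) − V_P^{π}(s) is the advantage function and d_P^{π†} is the discounted occupancy measure of π† under P. -/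
/-- Performance difference lemma in a finite MDP: for any two policies π† and π,
V_P^{π†} − V_P^{π} = (1/(1−γ))·E_{(s,a)∼d_P^{π†}}[A_P^{π}(s,a)], where
A_P^{π}(s,a) = Q_P^{π}(s,a) − V_P^{π}(s). -/
theorem stmt_19 {S A : Type*} [Fintype S] [Fintype A]
    (γ : ℝ) (hγ0 : 0 ≤ γ) (hγ1 : γ < 1)
    (P : S → A → S → ℝ) (π πdag : S → A → ℝ) (r : S → A → ℝ) (μ0 : S → ℝ)
    (hP : ∀ s a, (∀ s', 0 ≤ P s a s') ∧ (∑ s', P s a s') = 1)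
    (hπ : ∀ s, (∀ a, 0 ≤ π s a) ∧ (∑ a, π s a) = 1)
    (hπdag : ∀ s, (∀ a, 0 ≤ πdag s a) ∧ (∑ a, πdag s a) = 1)
    (hμ0 : (∀ s, 0 ≤ μ0 s) ∧ (∑ s, μ0 s) = 1)
    (hr : ∀ s a, r s a ∈ Set.Icc (0 : ℝ) 1)
    (VP VPdag : S → ℝ) (Qf Adv : S → A → ℝ) (ddag : S → A → ℝ)
    (hVP : ∀ s, VP s = ∑ a, π s a * (r s a + γ * ∑ s', P s a s' * VP s'))
    (hVPdag : ∀ s, VPdag s = ∑ a, πdag s a * (r s a + γ * ∑ s', P s a s' * VPdag s'))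
    (hQ : ∀ s a, Qf s a = r s a + γ * ∑ s', P s a s' * VP s')
    (hA : ∀ s a, Adv s a = Qf s a - VP s)
    (hddag : ∀ s a, ddag s a =
      πdag s a * ((1 - γ) * μ0 s + γ * ∑ s', ∑ a', ddag s' a' * P s' a' s)) :
    (∑ s, μ0 s * VPdag s) - (∑ s, μ0 s * VP s) =
      (1 / (1 - γ)) * ∑ s, ∑ a, ddag s a * Adv s a := by
  have h1γ : (1 : ℝ) - γ ≠ 0 := by linarith
  set m : S → ℝ := fun s => (1 - γ) * μ0 s + γ * ∑ s', ∑ a', ddag s' a' * P s' a' s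
    with hm
  have hdm : ∀ s a, ddag s a = πdag s a * m s := fun s a => hddag s a
  have hsum_ddag : ∀ s, ∑ a, ddag s a = m s := by
    intro s
    simp only [hdm]
    rw [← Finset.sum_mul, (hπdag s).2, one_mul]
  -- key identity: for any f, ∑ m f = (1-γ)∑ μ0 f + γ ∑∑ ddag ∑ P f
  have key3 : ∀ f : S → ℝ, ∑ s, m s * f s =
      (1 - γ) * (∑ s, μ0 s * f s) + γ * ∑ s, ∑ a, ddag s a * ∑ s', P s a s' * f s' := by
    intro f
    simp only [hm, add_mul, Finset.sum_add_distrib, Finset.mul_sum, Finset.sum_mul]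
    congr 1
    · exact Finset.sum_congr rfl fun s _ => by ring
    · rw [Finset.sum_comm]
      refine Finset.sum_congr rfl fun s _ => ?_
      rw [Finset.sum_comm]
      refine Finset.sum_congr rfl fun a _ => Finset.sum_congr rfl fun s' _ => by ring
  have expand : ∀ g : S → ℝ, ∀ s, ∑ a, ddag s a * (r s a + γ * ∑ s', P s a s' * g s')
      = (∑ a, ddag s a * r s a) + γ * ∑ a, ddag s a * ∑ s', P s a s' * g s' := by
    intro g s
    rw [Finset.mul_sum, ← Finset.sum_add_distrib]
    exact Finset.sum_congr rfl fun a _ => by ring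
  have hmQ : ∀ s, ∑ a, ddag s a * (r s a + γ * ∑ s', P s a s' * VPdag s') = m s * VPdag s := by
    intro s
    simp only [hdm]
    rw [hVPdag s, Finset.mul_sum]
    exact Finset.sum_congr rfl fun a _ => by ring
  have occ : ∑ s, ∑ a, ddag s a * r s a = (1 - γ) * ∑ s, μ0 s * VPdag s := by
    have h1 : ∑ s, ∑ a, ddag s a * (r s a + γ * ∑ s', P s a s' * VPdag s')
        = ∑ s, m s * VPdag s := Finset.sum_congr rfl fun s _ => hmQ s
    rw [key3 VPdag] at h1
    have h2 : ∑ s, ∑ a, ddag s a * (r s a + γ * ∑ s', P s a s' * VPdag s')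
        = (∑ s, ∑ a, ddag s a * r s a)
          + γ * ∑ s, ∑ a, ddag s a * ∑ s', P s a s' * VPdag s' := by
      calc ∑ s, ∑ a, ddag s a * (r s a + γ * ∑ s', P s a s' * VPdag s')
          = ∑ s, ((∑ a, ddag s a * r s a)
              + γ * ∑ a, ddag s a * ∑ s', P s a s' * VPdag s') :=
            Finset.sum_congr rfl fun s _ => expand VPdag s
        _ = _ := by rw [Finset.sum_add_distrib, ← Finset.mul_sum]
    rw [h2] at h1
    linarith
  have main : ∑ s, ∑ a, ddag s a * Adv s a
      = (1 - γ) * ((∑ s, μ0 s * VPdag s) - (∑ s, μ0 s * VP s)) := by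
    have hAdv : ∀ s, ∑ a, ddag s a * Adv s a
        = ((∑ a, ddag s a * r s a) + γ * ∑ a, ddag s a * ∑ s', P s a s' * VP s')
          - m s * VP s := by
      intro s
      have : ∑ a, ddag s a * Adv s a
          = (∑ a, ddag s a * (r s a + γ * ∑ s', P s a s' * VP s'))
            - (∑ a, ddag s a) * VP s := by
        rw [Finset.sum_mul, ← Finset.sum_sub_distrib]
        exact Finset.sum_congr rfl fun a _ => by rw [hA, hQ]; ring
      rw [this, expand VP s, hsum_ddag s]
    calc ∑ s, ∑ a, ddag s a * Adv s a
        = ((∑ s, ∑ a, ddag s a * r s a)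
            + γ * ∑ s, ∑ a, ddag s a * ∑ s', P s a s' * VP s')
          - ∑ s, m s * VP s := by
          rw [Finset.mul_sum, ← Finset.sum_add_distrib, ← Finset.sum_sub_distrib]
          exact Finset.sum_congr rfl fun s _ => hAdv s
      _ = (1 - γ) * ((∑ s, μ0 s * VPdag s) - (∑ s, μ0 s * VP s)) := by
          rw [occ, key3 VP]; ring
  rw [main]
  field_simp
end
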